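/- arXiv:2603.24462 — 6 statements merged into one kernel-verified Lean document; each statement's English description precedes it below -/
import Mathlib

section
/- If A, B ∈ SL(2,ℝ) satisfy tr(A⁻¹B⁻¹AB) = 2, then the commutator AB − BA has a nontrivial kernel, and consequently A and B have a common eigenvector (over ℂ). -/
open Matrix

section Helpers
variable {F : Type*} [Field F]

/-- Cayley–Hamilton for 2×2. -/
lemma cayley2 (X : Matrix (Fin 2) (Fin 2) F) :
    X * X = X.trace • X - X.det • (1 : Matrix (Fin 2) (Fin 2) F) := by
  ext i j
  fin_cases i <;> fin_cases j <;>
    simp [Matrix.mul_apply, Fin.sum_univ_two, Matrix.trace_fin_two, Matrix.det_fin_two,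
      Matrix.one_apply, Matrix.smul_apply, Matrix.sub_apply, smul_eq_mul] <;> ring

/-- Two vectors with proportional coordinates are dependent. -/
lemma dep_of_det (v u : Fin 2 → F) (hv : v ≠ 0) (h : v 0 * u 1 - v 1 * u 0 = 0) :
    ∃ c : F, u = c • v := by
  have hv' : v 0 ≠ 0 ∨ v 1 ≠ 0 := by
    by_contra hc
    push_neg at hc
    exact hv (funext fun i => by fin_cases i <;> simp [hc.1, hc.2])
  rcases hv' with h0 | h1
  · refine ⟨u 0 / v 0, funext fun i => ?_⟩
    fin_cases i <;> simp [Pi.smul_apply, smul_eq_mul]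
    · field_simp
    · field_simp
      linear_combination h
  · refine ⟨u 1 / v 1, funext fun i => ?_⟩
    fin_cases i <;> simp [Pi.smul_apply, smul_eq_mul]
    · field_simp
      linear_combination -h
    · field_simp

lemma mul_col (M : Matrix (Fin 2) (Fin 2) F) (x y : Fin 2 → F) :
    M * !![x 0, y 0; x 1, y 1] = !![(M *ᵥ x) 0, (M *ᵥ y) 0; (M *ᵥ x) 1, (M *ᵥ y) 1] := by
  ext i j
  fin_cases i <;> fin_cases j <;>
    simp [Matrix.mul_apply, Matrix.mulVec, dotProduct, Fin.sum_univ_two]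

/-- kernel of a nonzero 2×2 matrix is at most one-dimensional -/
lemma ker_le_one (N : Matrix (Fin 2) (Fin 2) F) (hN : N ≠ 0) (u w : Fin 2 → F)
    (hu : N *ᵥ u = 0) (hw : N *ᵥ w = 0) (hu0 : u ≠ 0) : ∃ c : F, w = c • u := by
  apply dep_of_det u w hu0
  by_contra hne
  set P : Matrix (Fin 2) (Fin 2) F := !![u 0, w 0; u 1, w 1] with hP
  have hdP : IsUnit P.det := by
    rw [hP, Matrix.det_fin_two_of]
    exact isUnit_iff_ne_zero.mpr (fun hz => hne (by linear_combination hz))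
  have hNP : N * P = 0 := by
    rw [hP, mul_col, hu, hw]
    ext i j; fin_cases i <;> fin_cases j <;> simp
  have : N = 0 := by
    calc N = N * (P * P⁻¹) := by rw [Matrix.mul_nonsing_inv P hdP, mul_one]
    _ = N * P * P⁻¹ := by rw [Matrix.mul_assoc]
    _ = 0 := by rw [hNP, zero_mul]
  exact hN this

lemma exists_mulVec_ne_zero (N : Matrix (Fin 2) (Fin 2) F) (hN : N ≠ 0) :
    ∃ u : Fin 2 → F, N *ᵥ u ≠ 0 := by
  by_contra hc
  push_neg at hc
  apply hN
  ext i j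
  have := congrFun (hc (Pi.single j 1)) i
  simpa using this

lemma eigen_of_two (M : Matrix (Fin 2) (Fin 2) F) (lam : F) (x y : Fin 2 → F)
    (hx : M *ᵥ x = lam • x) (hy : M *ᵥ y = lam • y) (hind : x 0 * y 1 - x 1 * y 0 ≠ 0) :
    M = lam • (1 : Matrix (Fin 2) (Fin 2) F) := by
  set P : Matrix (Fin 2) (Fin 2) F := !![x 0, y 0; x 1, y 1] with hP
  have hdP : IsUnit P.det := by
    rw [hP, Matrix.det_fin_two_of]
    exact isUnit_iff_ne_zero.mpr (fun hz => hind (by linear_combination hz))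
  have hMP : M * P = lam • P := by
    rw [hP, mul_col, hx, hy]
    ext i j; fin_cases i <;> fin_cases j <;> simp
  calc M = M * (P * P⁻¹) := by rw [Matrix.mul_nonsing_inv P hdP, mul_one]
  _ = (M * P) * P⁻¹ := by rw [Matrix.mul_assoc]
  _ = lam • (P * P⁻¹) := by rw [hMP, Matrix.smul_mul]
  _ = lam • 1 := by rw [Matrix.mul_nonsing_inv P hdP]

lemma mulVec_ne_zero (M : Matrix (Fin 2) (Fin 2) F) (hM : M.det = 1) (v : Fin 2 → F)
    (hv : v ≠ 0) : M *ᵥ v ≠ 0 := by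
  intro h
  apply hv
  have hu : IsUnit M.det := by rw [hM]; exact isUnit_one
  calc v = (M⁻¹ * M) *ᵥ v := by rw [Matrix.nonsing_inv_mul M hu, Matrix.one_mulVec]
  _ = M⁻¹ *ᵥ (M *ᵥ v) := by rw [← Matrix.mulVec_mulVec]
  _ = 0 := by rw [h, Matrix.mulVec_zero]

lemma core (A B : Matrix (Fin 2) (Fin 2) F)
    (hA : A.det = 1) (hB : B.det = 1)
    (htr : (A⁻¹ * B⁻¹ * A * B).trace = 2) :
    (A * B - B * A).det = 0 ∧ (B * A * B⁻¹ * A⁻¹).trace = 2 := by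
  have hiA : A⁻¹ = A.adjugate := by rw [Matrix.inv_def, hA, Ring.inverse_one, one_smul]
  have hiB : B⁻¹ = B.adjugate := by rw [Matrix.inv_def, hB, Ring.inverse_one, one_smul]
  rw [hiA, hiB] at htr ⊢
  obtain ⟨a, b, c, d, rfl⟩ : ∃ a b c d, A = !![a, b; c, d] :=
    ⟨A 0 0, A 0 1, A 1 0, A 1 1, Matrix.eta_fin_two A⟩
  obtain ⟨e, f, g, h, rfl⟩ : ∃ e f g h, B = !![e, f; g, h] :=
    ⟨B 0 0, B 0 1, B 1 0, B 1 1, Matrix.eta_fin_two B⟩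
  rw [Matrix.det_fin_two_of] at hA hB
  simp only [Matrix.adjugate_fin_two_of, Matrix.mul_fin_two] at htr ⊢
  rw [Matrix.trace_fin_two_of] at htr
  constructor
  · rw [Matrix.det_fin_two]
    simp only [Matrix.sub_apply]
    simp only [Matrix.cons_val', Matrix.cons_val_zero, Matrix.cons_val_one, Matrix.head_cons,
      Matrix.empty_val', Matrix.cons_val_fin_one, Matrix.head_fin_const, Matrix.of_apply]
    linear_combination (-1) * htr + (2 * (e * h - f * g)) * hA + 2 * hB
  · rw [Matrix.trace_fin_two_of]
    linear_combination htr

lemma exists_eigen (M : Matrix (Fin 2) (Fin 2) ℂ) :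
    ∃ (α : ℂ) (v : Fin 2 → ℂ), v ≠ 0 ∧ M *ᵥ v = α • v := by
  obtain ⟨s, hs⟩ := IsAlgClosed.exists_pow_nat_eq ((M 0 0 + M 1 1) ^ 2 - 4 * M.det)
    (n := 2) (by norm_num)
  rw [Matrix.det_fin_two] at hs
  have hdet : (M - ((M 0 0 + M 1 1 + s) / 2) • 1).det = 0 := by
    rw [Matrix.det_fin_two]
    simp only [Matrix.sub_apply, Matrix.smul_apply, Matrix.one_apply, smul_eq_mul]
    norm_num
    linear_combination hs / 4
  obtain ⟨v, hv0, hMv⟩ := Matrix.exists_mulVec_eq_zero_iff.mpr hdet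
  refine ⟨(M 0 0 + M 1 1 + s) / 2, v, hv0, ?_⟩
  rw [Matrix.sub_mulVec, Matrix.smul_mulVec, Matrix.one_mulVec] at hMv
  exact sub_eq_zero.mp hMv

end Helpers

theorem stmt_3 (A B : Matrix (Fin 2) (Fin 2) ℝ)
    (hA : A.det = 1) (hB : B.det = 1)
    (htr : (A⁻¹ * B⁻¹ * A * B).trace = 2) :
    (∃ v : Fin 2 → ℝ, v ≠ 0 ∧ (A * B - B * A).mulVec v = 0) ∧
      ∃ w : Fin 2 → ℂ, w ≠ 0 ∧ ∃ α β : ℂ,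
        (A.map (fun t => (t : ℂ))).mulVec w = α • w ∧
        (B.map (fun t => (t : ℂ))).mulVec w = β • w := by
  obtain ⟨hdetR, -⟩ := core A B hA hB htr
  refine ⟨Matrix.exists_mulVec_eq_zero_iff.mpr hdetR, ?_⟩
  set f : ℝ →+* ℂ := Complex.ofRealHom with hf
  set A' : Matrix (Fin 2) (Fin 2) ℂ := A.map (fun t => (t : ℂ)) with hA'
  set B' : Matrix (Fin 2) (Fin 2) ℂ := B.map (fun t => (t : ℂ)) with hB'
  have hmapA : A' = f.mapMatrix A := rfl
  have hmapB : B' = f.mapMatrix B := rfl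
  have hdetA' : A'.det = 1 := by rw [hmapA, ← RingHom.map_det, hA, _root_.map_one]
  have hdetB' : B'.det = 1 := by rw [hmapB, ← RingHom.map_det, hB, _root_.map_one]
  have huA : IsUnit A'.det := by rw [hdetA']; exact isUnit_one
  have huB : IsUnit B'.det := by rw [hdetB']; exact isUnit_one
  have hinvA : A'⁻¹ = f.mapMatrix A⁻¹ := by
    rw [Matrix.inv_def, hdetA', Ring.inverse_one, one_smul, Matrix.inv_def A, hA,
      Ring.inverse_one, one_smul, hmapA, RingHom.map_adjugate]
  have hinvB : B'⁻¹ = f.mapMatrix B⁻¹ := by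
    rw [Matrix.inv_def, hdetB', Ring.inverse_one, one_smul, Matrix.inv_def B, hB,
      Ring.inverse_one, one_smul, hmapB, RingHom.map_adjugate]
  have htrace_map : ∀ M : Matrix (Fin 2) (Fin 2) ℝ, (f.mapMatrix M).trace = f M.trace := by
    intro M
    simp [Matrix.trace, Matrix.diag, RingHom.mapMatrix_apply, Matrix.map_apply, map_sum]
  have htrC : (A'⁻¹ * B'⁻¹ * A' * B').trace = 2 := by
    rw [hinvA, hinvB, hmapA, hmapB, ← _root_.map_mul, ← _root_.map_mul, ← _root_.map_mul, htrace_map, htr]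
    simp [hf]
  obtain ⟨hdetC0, htr2⟩ := core A' B' hdetA' hdetB' htrC
  by_cases hK : A' * B' - B' * A' = 0
  · -- commuting case
    have hcomm : A' * B' = B' * A' := sub_eq_zero.mp hK
    obtain ⟨α, v, hv0, hAv⟩ := exists_eigen A'
    by_cases hBv : ∃ c : ℂ, B' *ᵥ v = c • v
    · obtain ⟨β, hb⟩ := hBv
      exact ⟨v, hv0, α, β, hAv, hb⟩
    · have hind : v 0 * (B' *ᵥ v) 1 - v 1 * (B' *ᵥ v) 0 ≠ 0 :=
        fun hz => hBv (dep_of_det v (B' *ᵥ v) hv0 hz)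
      have hBAv : A' *ᵥ (B' *ᵥ v) = α • (B' *ᵥ v) := by
        rw [Matrix.mulVec_mulVec, hcomm, ← Matrix.mulVec_mulVec, hAv, Matrix.mulVec_smul]
      have hA'id : A' = α • 1 := eigen_of_two A' α v (B' *ᵥ v) hAv hBAv hind
      obtain ⟨β, w, hw0, hBw⟩ := exists_eigen B'
      refine ⟨w, hw0, α, β, ?_, hBw⟩
      rw [hA'id, Matrix.smul_mulVec, Matrix.one_mulVec]
  · -- noncommuting case
    obtain ⟨v, hv0, hKv⟩ := Matrix.exists_mulVec_eq_zero_iff.mpr hdetC0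
    have hKtr : (A' * B' - B' * A').trace = 0 := by
      rw [Matrix.trace_sub, Matrix.trace_mul_comm]; ring
    have hKK : (A' * B' - B' * A') * (A' * B' - B' * A') = 0 := by
      rw [cayley2, hKtr, hdetC0]; simp
    set X := B' * A' * B'⁻¹ * A'⁻¹ with hX
    have hdetX : X.det = 1 := by
      rw [hX]
      simp [Matrix.det_mul, Matrix.det_nonsing_inv, hdetA', hdetB']
    have hM2sq : (1 - X) * (1 - X) = 0 := by
      have hexp : (1 - X) * (1 - X) = 1 - X - X + X * X := by noncomm_ring
      rw [hexp, cayley2, htr2, hdetX, one_smul, two_smul ℂ X]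
      abel
    have hM2K : (1 - X) * (A' * B') = A' * B' - B' * A' := by
      rw [Matrix.sub_mul, one_mul, hX]
      congr 1
      rw [Matrix.mul_assoc (B' * A' * B'⁻¹) A'⁻¹ (A' * B'),
        Matrix.nonsing_inv_mul_cancel_left A' B' huA,
        Matrix.mul_assoc (B' * A') B'⁻¹ B', Matrix.nonsing_inv_mul B' huB, mul_one]
    have hM2ne : (1 : Matrix (Fin 2) (Fin 2) ℂ) - X ≠ 0 := by
      intro h0; apply hK; rw [← hM2K, h0, zero_mul]
    have hKall : ∀ u, ∃ c : ℂ, (A' * B' - B' * A') *ᵥ u = c • v := by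
      intro u
      exact ker_le_one _ hK v _ hKv
        (by rw [Matrix.mulVec_mulVec, hKK, Matrix.zero_mulVec]) hv0
    have huAB : IsUnit (A' * B').det := by
      rw [Matrix.det_mul, hdetA', hdetB', mul_one]; exact isUnit_one
    have hM2eq : 1 - X = (A' * B' - B' * A') * (A' * B')⁻¹ := by
      rw [← hM2K, Matrix.mul_assoc, Matrix.mul_nonsing_inv _ huAB, mul_one]
    obtain ⟨u1, hu1ne⟩ := exists_mulVec_ne_zero _ hM2ne
    set y := (1 - X) *ᵥ u1 with hy
    obtain ⟨e, hye⟩ : ∃ e : ℂ, y = e • v := by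
      rw [hy, hM2eq, ← Matrix.mulVec_mulVec]
      exact hKall _
    have hM2y : (1 - X) *ᵥ y = 0 := by
      rw [hy, Matrix.mulVec_mulVec, hM2sq, Matrix.zero_mulVec]
    have hM2w1 : (1 - X) *ᵥ ((A' * B') *ᵥ v) = 0 := by
      rw [Matrix.mulVec_mulVec, hM2K, hKv]
    obtain ⟨d, hd⟩ := ker_le_one _ hM2ne y ((A' * B') *ᵥ v) hM2y hM2w1 hu1ne
    set lam := d * e with hlamdef
    have hlam : (A' * B') *ᵥ v = lam • v := by rw [hd, hye, smul_smul, hlamdef]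
    have hlam0 : lam ≠ 0 := by
      intro h0
      exact mulVec_ne_zero (A' * B')
        (by rw [Matrix.det_mul, hdetA', hdetB', mul_one]) v hv0
        (by rw [hlam, h0, zero_smul])
    have hBAv : (B' * A') *ᵥ v = lam • v := by
      have h1 := hKv
      rw [Matrix.sub_mulVec] at h1
      rw [← sub_eq_zero.mp h1, hlam]
    have hBBv : (B' * A') *ᵥ (B' *ᵥ v) = lam • (B' *ᵥ v) := by
      rw [Matrix.mulVec_mulVec]
      have hassoc : B' * A' * B' = B' * (A' * B') := by rw [Matrix.mul_assoc]
      rw [hassoc, ← Matrix.mulVec_mulVec, hlam, Matrix.mulVec_smul]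
    by_cases hind : v 0 * (B' *ᵥ v) 1 - v 1 * (B' *ᵥ v) 0 = 0
    · obtain ⟨c, hc⟩ := dep_of_det v (B' *ᵥ v) hv0 hind
      have hc0 : c ≠ 0 := by
        intro h0
        exact mulVec_ne_zero B' hdetB' v hv0 (by rw [hc, h0, zero_smul])
      refine ⟨v, hv0, c⁻¹ * lam, c, ?_, hc⟩
      have h3 : A' *ᵥ (B' *ᵥ v) = lam • v := by rw [Matrix.mulVec_mulVec, hlam]
      rw [hc, Matrix.mulVec_smul] at h3
      have h4 := congrArg (fun z => c⁻¹ • z) h3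
      simp only [smul_smul, inv_mul_cancel₀ hc0, one_smul] at h4
      rw [h4]
    · exfalso
      apply hK
      have hscal : B' * A' = lam • 1 :=
        eigen_of_two (B' * A') lam v (B' *ᵥ v) hBAv hBBv hind
      have h4 : (A' * B') * A' = (lam • 1) * A' := by
        calc (A' * B') * A' = A' * (B' * A') := by rw [Matrix.mul_assoc]
        _ = A' * (lam • 1) := by rw [hscal]
        _ = lam • A' := by rw [Matrix.mul_smul, mul_one]
        _ = (lam • 1) * A' := by rw [Matrix.smul_mul, one_mul]
      have h5 : A' * B' = lam • 1 := by
        calc A' * B' = (A' * B') * A' * A'⁻¹ := by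
              rw [Matrix.mul_nonsing_inv_cancel_right _ _ huA]
        _ = (lam • 1) * A' * A'⁻¹ := by rw [h4]
        _ = lam • 1 := by rw [Matrix.mul_nonsing_inv_cancel_right _ _ huA]
      rw [h5, hscal, sub_self]
end

section
/- Let A(x) be a continuous 2×2 matrix-valued function on [a,b] with all entries nonnegative, and let B be a constant 2×2 matrix with nonnegative entries such that B_{ij} ≤ A_{ij}(x) for all i,j and all x ∈ [a,b]. Let w ∈ ℝ² be a nonzero vector with nonnegative entries, and let y, z : [a,b] → ℝ² solve y' = A(x)y and z' = Bz with y(a) = z(a) = w. Then y_i(x) ≥ z_i(x) for i = 1,2 and all x ∈ [a,b]. -/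
open Set Matrix Filter Topology

/-!
If `u' ≥ M(x) u` componentwise with `M ≥ 0` bounded, the total negative part
`m = ∑ᵢ (uᵢ)⁻` is not differentiable, but its right difference quotients are bounded by those of
`u`, so its upper right derivative is at most `K m`. Since `m(a) = 0`, Gronwall's inequality gives
`m ≡ 0`, i.e. `u ≥ 0`. This applies to `u = y` with `M = A`, and then to `u = y - z` with `M = B`,
because `(y - z)' = B (y - z) + (A - B) y` and `(A - B) y ≥ 0`.
-/

theorem negPart_add_le {α : Type*} [Lattice α] [AddCommGroup α] [AddLeftMono α] (s t : α) :
    (s + t)⁻ ≤ s⁻ + t⁻ := by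
  rw [negPart_def]
  refine sup_le ?_ (add_nonneg (negPart_nonneg s) (negPart_nonneg t))
  rw [neg_add]
  exact add_le_add (neg_le_negPart s) (neg_le_negPart t)

theorem negPart_mul_of_nonneg {α : Type*} [Ring α] [LinearOrder α] [IsStrictOrderedRing α] {c : α}
    (hc : 0 ≤ c) (s : α) : (c * s)⁻ = c * s⁻ := by
  rw [negPart_def, negPart_def, mul_max_of_nonneg _ _ hc, mul_neg, mul_zero]

section negMass

variable {ι : Type*} [Fintype ι]

theorem mulVec_le_mulVec_of_le {M N : Matrix ι ι ℝ} (hMN : ∀ i j, M i j ≤ N i j) {v : ι → ℝ}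
    (hv : 0 ≤ v) : M *ᵥ v ≤ N *ᵥ v := fun i =>
  Finset.sum_le_sum fun j _ => mul_le_mul_of_nonneg_right (hMN i j) (hv j)

def negMass (v : ι → ℝ) : ℝ := ∑ i, (v i)⁻

theorem negMass_nonneg (v : ι → ℝ) : 0 ≤ negMass v :=
  Finset.sum_nonneg fun i _ => negPart_nonneg (v i)

theorem negMass_eq_zero_iff {v : ι → ℝ} : negMass v = 0 ↔ 0 ≤ v := by
  simp only [negMass, Finset.sum_eq_zero_iff_of_nonneg fun i _ => negPart_nonneg (v i),
    Finset.mem_univ, true_implies, negPart_eq_zero, Pi.le_def, Pi.zero_apply]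

theorem continuous_negMass : Continuous (negMass : (ι → ℝ) → ℝ) :=
  continuous_finsetSum _ fun i _ => continuous_negPart.comp (continuous_apply i)

theorem negMass_smul {c : ℝ} (hc : 0 ≤ c) (v : ι → ℝ) : negMass (c • v) = c * negMass v := by
  simp only [negMass, Pi.smul_apply, smul_eq_mul, negPart_mul_of_nonneg hc, Finset.mul_sum]

theorem negMass_sub_le (v w : ι → ℝ) : negMass v - negMass w ≤ negMass (v - w) := by
  rw [sub_le_iff_le_add, negMass, negMass, negMass, ← Finset.sum_add_distrib]
  refine Finset.sum_le_sum fun i _ => ?_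
  simpa using negPart_add_le (v i - w i) (w i)

theorem negMass_le_of_mulVec_le {M : Matrix ι ι ℝ} {C : ℝ} (hM0 : ∀ i j, 0 ≤ M i j)
    (hMC : ∀ i j, M i j ≤ C) {v w : ι → ℝ} (h : M *ᵥ v ≤ w) :
    negMass w ≤ Fintype.card ι * C * negMass v := by
  have hcomp (i : ι) : (w i)⁻ ≤ C * negMass v := by
    have hC : 0 ≤ C := (hM0 i i).trans (hMC i i)
    refine negPart_def (w i) ▸ sup_le ?_ (mul_nonneg hC (negMass_nonneg v))
    calc -w i ≤ -(M *ᵥ v) i := neg_le_neg (h i)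
      _ = ∑ j, M i j * -v j := by simp [mulVec, dotProduct]
      _ ≤ ∑ j, C * (v j)⁻ := Finset.sum_le_sum fun j _ =>
          (mul_le_mul_of_nonneg_left (neg_le_negPart _) (hM0 i j)).trans
            (mul_le_mul_of_nonneg_right (hMC i j) (negPart_nonneg _))
      _ = C * negMass v := by rw [negMass, Finset.mul_sum]
  calc negMass w ≤ ∑ _i : ι, C * negMass v := Finset.sum_le_sum fun i _ => hcomp i
    _ = Fintype.card ι * C * negMass v := by simp [mul_assoc]

theorem eventually_slope_negMass_lt {u : ℝ → ι → ℝ} {v : ι → ℝ} {x r : ℝ}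
    (hu : HasDerivWithinAt u v (Ioi x) x) (hr : negMass v < r) :
    ∀ᶠ z in 𝓝[>] x, slope (negMass ∘ u) x z < r := by
  have hslope : Tendsto (slope u x) (𝓝[>] x) (𝓝 v) :=
    (hasDerivWithinAt_iff_tendsto_slope' (lt_irrefl x)).1 hu
  filter_upwards [(continuous_negMass.tendsto v).comp hslope |>.eventually_lt_const hr,
    self_mem_nhdsWithin] with z hz (hxz : x < z)
  refine lt_of_le_of_lt ?_ hz
  have hc : 0 ≤ (z - x)⁻¹ := inv_nonneg.2 (sub_nonneg.2 hxz.le)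
  simp only [Function.comp_apply, slope_def_module, smul_eq_mul, negMass_smul hc]
  exact mul_le_mul_of_nonneg_left (negMass_sub_le _ _) hc

theorem nonneg_of_negMass_deriv_le {u u' : ℝ → ι → ℝ} {K a b : ℝ}
    (hu : ∀ x ∈ Icc a b, HasDerivWithinAt u (u' x) (Icc a b) x)
    (hbound : ∀ x ∈ Ico a b, negMass (u' x) ≤ K * negMass (u x)) (ha : 0 ≤ u a) :
    ∀ x ∈ Icc a b, 0 ≤ u x := by
  have hcont : ContinuousOn (negMass ∘ u) (Icc a b) :=
    continuous_negMass.comp_continuousOn fun x hx => (hu x hx).continuousWithinAt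
  have hslope (x : ℝ) (hx : x ∈ Ico a b) (r : ℝ) (hr : negMass (u' x) < r) :
      ∃ᶠ z in 𝓝[>] x, (z - x)⁻¹ * ((negMass ∘ u) z - (negMass ∘ u) x) < r :=
    (eventually_slope_negMass_lt ((hu x (Ico_subset_Icc_self hx)).mono_of_mem_nhdsWithin
      (Icc_mem_nhdsGT_of_mem hx)) hr).frequently
  have hgronwall := le_gronwallBound_of_liminf_deriv_right_le (K := K) (ε := 0) hcont hslope
    (negMass_eq_zero_iff.2 ha).le fun x hx => (hbound x hx).trans_eq (add_zero _).symm
  intro x hx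
  refine negMass_eq_zero_iff.1 (le_antisymm ?_ (negMass_nonneg _))
  simpa [gronwallBound_ε0_δ0] using hgronwall x hx

theorem exists_forall_apply_le_of_continuousOn {m n : Type*} [Finite m] [Finite n]
    {M : ℝ → Matrix m n ℝ} {s : Set ℝ} (hs : IsCompact s) (hM : ContinuousOn M s) :
    ∃ C, ∀ x ∈ s, ∀ i j, M x i j ≤ C := by
  choose C hC using fun p : m × n =>
    (hs.image_of_continuousOn ((continuous_id.matrix_elem p.1 p.2).comp_continuousOn hM)).bddAbove
  obtain ⟨K, hK⟩ := Finite.exists_le C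
  exact ⟨K, fun x hx i j => (hC (i, j) (mem_image_of_mem _ hx)).trans (hK (i, j))⟩

theorem nonneg_of_mulVec_le_deriv {M : ℝ → Matrix ι ι ℝ} {u u' : ℝ → ι → ℝ} {a b : ℝ}
    (hM : ContinuousOn M (Icc a b)) (hM0 : ∀ x ∈ Icc a b, ∀ i j, 0 ≤ M x i j)
    (hu : ∀ x ∈ Icc a b, HasDerivWithinAt u (u' x) (Icc a b) x)
    (hMu : ∀ x ∈ Icc a b, M x *ᵥ u x ≤ u' x) (ha : 0 ≤ u a) :
    ∀ x ∈ Icc a b, 0 ≤ u x := by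
  obtain ⟨C, hC⟩ := exists_forall_apply_le_of_continuousOn isCompact_Icc hM
  refine nonneg_of_negMass_deriv_le (K := Fintype.card ι * C) hu (fun x hx => ?_) ha
  have hx' := Ico_subset_Icc_self hx
  exact negMass_le_of_mulVec_le (hM0 x hx') (hC x hx') (hMu x hx')

end negMass

theorem stmt_4_general (a b : ℝ)
    (A : ℝ → Matrix (Fin 2) (Fin 2) ℝ) (B : Matrix (Fin 2) (Fin 2) ℝ)
    (hAcont : ContinuousOn A (Icc a b))
    (hAnonneg : ∀ x ∈ Icc a b, ∀ i j, 0 ≤ A x i j)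
    (hBnonneg : ∀ i j, 0 ≤ B i j)
    (hBA : ∀ x ∈ Icc a b, ∀ i j, B i j ≤ A x i j)
    (w : Fin 2 → ℝ) (hwnonneg : ∀ i, 0 ≤ w i)
    (y z : ℝ → Fin 2 → ℝ)
    (hy : ∀ x ∈ Icc a b, HasDerivWithinAt y ((A x).mulVec (y x)) (Icc a b) x)
    (hz : ∀ x ∈ Icc a b, HasDerivWithinAt z (B.mulVec (z x)) (Icc a b) x)
    (hya : y a = w) (hza : z a = w) :
    ∀ x ∈ Icc a b, ∀ i, z x i ≤ y x i := by
  have hy_nonneg : ∀ x ∈ Icc a b, 0 ≤ y x :=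
    nonneg_of_mulVec_le_deriv hAcont hAnonneg hy (fun _ _ => le_rfl) (hya ▸ hwnonneg)
  have hyz_nonneg : ∀ x ∈ Icc a b, 0 ≤ y x - z x := by
    refine nonneg_of_mulVec_le_deriv (M := fun _ => B) continuousOn_const (fun _ _ => hBnonneg)
      (fun x hx => (hy x hx).sub (hz x hx)) (fun x hx => ?_) (by simp [hya, hza])
    rw [mulVec_sub]
    exact sub_le_sub_right (mulVec_le_mulVec_of_le (hBA x hx) (hy_nonneg x hx)) _
  exact fun x hx i => sub_nonneg.1 (hyz_nonneg x hx i)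

theorem stmt_4 (a b : ℝ) (hab : a ≤ b)
    (A : ℝ → Matrix (Fin 2) (Fin 2) ℝ) (B : Matrix (Fin 2) (Fin 2) ℝ)
    (hAcont : ContinuousOn A (Icc a b))
    (hAnonneg : ∀ x ∈ Icc a b, ∀ i j, 0 ≤ A x i j)
    (hBnonneg : ∀ i j, 0 ≤ B i j)
    (hBA : ∀ x ∈ Icc a b, ∀ i j, B i j ≤ A x i j)
    (w : Fin 2 → ℝ) (hw : w ≠ 0) (hwnonneg : ∀ i, 0 ≤ w i)
    (y z : ℝ → Fin 2 → ℝ)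
    (hy : ∀ x ∈ Icc a b, HasDerivWithinAt y ((A x).mulVec (y x)) (Icc a b) x)
    (hz : ∀ x ∈ Icc a b, HasDerivWithinAt z (B.mulVec (z x)) (Icc a b) x)
    (hya : y a = w) (hza : z a = w) :
    ∀ x ∈ Icc a b, ∀ i, z x i ≤ y x i :=
  stmt_4_general a b A B hAcont hAnonneg hBnonneg hBA w hwnonneg y z hy hz hya hza
end

section
/- Let k > 0 and let R : [a,b] → ℝ be a C² function satisfying R''(x) ≥ k·R(x) for all x, R'(x) ≥ 0 for all x, and R(a) = R₀ > 0. Then R(x) ≥ (R₀/2)(e^{√k(x−a)} + e^{−√k(x−a)}) for all x ∈ [a,b]. -/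
/-!
Compare `R` with the positive solution `C x = cosh (√k (x - a))` of `C'' = k C`, which has
`C a = 1` and `C' a = 0`. The Wronskian `W = R' C - R C'` has `W' = (R'' - k R) C ≥ 0` and
`W a = R' a ≥ 0`, so `W ≥ 0` on `[a, b]`. Since `(R / C)' = W / C²`, the ratio `R / C` is
monotone, hence `R / C ≥ R a / C a = R₀`.
-/

open Set

theorem monotoneOn_Icc_of_hasDerivWithinAt_nonneg {a b : ℝ} {f f' : ℝ → ℝ}
    (hf : ∀ x ∈ Icc a b, HasDerivWithinAt f (f' x) (Icc a b) x)
    (hf'₀ : ∀ x ∈ Icc a b, 0 ≤ f' x) : MonotoneOn f (Icc a b) :=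
  monotoneOn_of_hasDerivWithinAt_nonneg (convex_Icc a b)
    (fun x hx => (hf x hx).continuousWithinAt)
    (fun x hx => (hf x (interior_subset hx)).mono interior_subset)
    (fun x hx => hf'₀ x (interior_subset hx))

theorem HasDerivWithinAt.wronskian {u u' v v' : ℝ → ℝ} {u'' v'' x : ℝ} {s : Set ℝ}
    (hu : HasDerivWithinAt u (u' x) s x) (hu' : HasDerivWithinAt u' u'' s x)
    (hv : HasDerivWithinAt v (v' x) s x) (hv' : HasDerivWithinAt v' v'' s x) :
    HasDerivWithinAt (fun y => u' y * v y - u y * v' y) (u'' * v x - u x * v'') s x :=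
  ((hu'.mul hv).sub (hu.mul hv')).congr_deriv (by ring)

section Comparison

variable {a b k : ℝ} {u u' u'' v v' : ℝ → ℝ}
  (hu : ∀ x ∈ Icc a b, HasDerivWithinAt u (u' x) (Icc a b) x)
  (hv : ∀ x ∈ Icc a b, HasDerivWithinAt v (v' x) (Icc a b) x)
  (hv_pos : ∀ x ∈ Icc a b, 0 < v x)
include hu hv hv_pos

theorem monotoneOn_div_of_wronskian_nonneg
    (hW : ∀ x ∈ Icc a b, 0 ≤ u' x * v x - u x * v' x) :
    MonotoneOn (fun x => u x / v x) (Icc a b) :=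
  monotoneOn_Icc_of_hasDerivWithinAt_nonneg
    (fun x hx => (hu x hx).div (hv x hx) (hv_pos x hx).ne')
    (fun x hx => div_nonneg (hW x hx) (sq_nonneg _))

theorem monotoneOn_div_of_supersolution
    (hu' : ∀ x ∈ Icc a b, HasDerivWithinAt u' (u'' x) (Icc a b) x)
    (hv' : ∀ x ∈ Icc a b, HasDerivWithinAt v' (k * v x) (Icc a b) x)
    (hineq : ∀ x ∈ Icc a b, k * u x ≤ u'' x)
    (hWa : 0 ≤ u' a * v a - u a * v' a) :
    MonotoneOn (fun x => u x / v x) (Icc a b) := by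
  have hW_mono : MonotoneOn (fun x => u' x * v x - u x * v' x) (Icc a b) :=
    monotoneOn_Icc_of_hasDerivWithinAt_nonneg
      (fun x hx => (hu x hx).wronskian (hu' x hx) (hv x hx) (hv' x hx))
      (fun x hx => by nlinarith [hineq x hx, hv_pos x hx])
  refine monotoneOn_div_of_wronskian_nonneg hu hv hv_pos fun x hx => ?_
  exact hWa.trans (hW_mono ⟨le_rfl, hx.1.trans hx.2⟩ hx hx.1)

end Comparison

theorem hasDerivAt_cosh_mul_sub (c a x : ℝ) :
    HasDerivAt (fun y => Real.cosh (c * (y - a))) (c * Real.sinh (c * (x - a))) x := by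
  have := (((hasDerivAt_id x).sub_const a).const_mul c).cosh
  simpa [mul_comm] using this

theorem hasDerivAt_sinh_mul_sub (c a x : ℝ) :
    HasDerivAt (fun y => c * Real.sinh (c * (y - a))) (c * c * Real.cosh (c * (x - a))) x := by
  have := ((((hasDerivAt_id x).sub_const a).const_mul c).sinh).const_mul c
  simpa [mul_comm, mul_left_comm, mul_assoc] using this

theorem stmt_6_general (a b k R₀ : ℝ) (hk : 0 < k)
    (R R' R'' : ℝ → ℝ)
    (hR' : ∀ x ∈ Icc a b, HasDerivWithinAt R (R' x) (Icc a b) x)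
    (hR'' : ∀ x ∈ Icc a b, HasDerivWithinAt R' (R'' x) (Icc a b) x)
    (hineq : ∀ x ∈ Icc a b, k * R x ≤ R'' x)
    (hmono : ∀ x ∈ Icc a b, 0 ≤ R' x)
    (hRa : R a = R₀) :
    ∀ x ∈ Icc a b,
      R₀ / 2 * (Real.exp (Real.sqrt k * (x - a)) + Real.exp (-(Real.sqrt k * (x - a)))) ≤ R x := by
  intro x hx
  have ha : a ∈ Icc a b := ⟨le_rfl, hx.1.trans hx.2⟩
  set s := Real.sqrt k
  have hss : s * s = k := Real.mul_self_sqrt hk.le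
  have hratio := monotoneOn_div_of_supersolution (k := k) (v := fun y => Real.cosh (s * (y - a)))
    hR' (fun y _ => (hasDerivAt_cosh_mul_sub s a y).hasDerivWithinAt)
    (fun y _ => Real.cosh_pos _) hR''
    (fun y _ => hss ▸ (hasDerivAt_sinh_mul_sub s a y).hasDerivWithinAt) hineq
    (by simpa using hmono a ha) ha hx hx.1
  simp only [sub_self, mul_zero, Real.cosh_zero, div_one, hRa] at hratio
  rw [div_mul_eq_mul_div, mul_div_assoc, ← Real.cosh_eq]
  exact (le_div_iff₀ (Real.cosh_pos _)).mp hratio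

theorem stmt_6 (a b k R₀ : ℝ) (hk : 0 < k) (hR₀ : 0 < R₀)
    (R R' R'' : ℝ → ℝ)
    (hR' : ∀ x ∈ Icc a b, HasDerivWithinAt R (R' x) (Icc a b) x)
    (hR'' : ∀ x ∈ Icc a b, HasDerivWithinAt R' (R'' x) (Icc a b) x)
    (hR''cont : ContinuousOn R'' (Icc a b))
    (hineq : ∀ x ∈ Icc a b, k * R x ≤ R'' x)
    (hmono : ∀ x ∈ Icc a b, 0 ≤ R' x)
    (hRa : R a = R₀) :
    ∀ x ∈ Icc a b,
      R₀ / 2 * (Real.exp (Real.sqrt k * (x - a)) + Real.exp (-(Real.sqrt k * (x - a)))) ≤ R x :=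
  stmt_6_general a b k R₀ hk R R' R'' hR' hR'' hineq hmono hRa
end

section
/- Let B ∈ SL(2,ℝ). If B maps the line spanned by its most expanded direction U(B) to the line orthogonal to it (i.e., B·U(B) = S(B) as elements of the projective line, where S(B) ⟂ U(B)), then tr B = 0 and consequently B² = −I. -/
open Matrix

noncomputable def matCLM (B : Matrix (Fin 2) (Fin 2) ℝ) :
    EuclideanSpace ℝ (Fin 2) →L[ℝ] EuclideanSpace ℝ (Fin 2) :=
  Matrix.toEuclideanCLM (𝕜 := ℝ) B

/-
Write `f` for `B` acting on the Euclidean plane and `ω` for an area form. Since `f u = c • s` with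
`u ⟂ s`, we get `⟪u, f u⟫ = 0`, so `tr B = ⟪s, f s⟫`. As `‖f u‖ ≤ ‖B‖`, the hypothesis on `s` gives
`‖f u‖ ‖f s‖ ≤ 1 = |det B| = |ω (f u) (f s)|`, and the identity
`⟪x, y⟫² + ω x y² = ‖x‖² ‖y‖²` forces `⟪f u, f s⟫ = c ⟪s, f s⟫ = 0`; `c ≠ 0` because `B` is
invertible. Hence `tr B = 0`, and Cayley–Hamilton gives `B * B = (tr B) • B - (det B) • 1 = -1`.
-/

open Module
open scoped RealInnerProductSpace

theorem Matrix.mul_self_eq_trace_smul_sub_det_smul {R : Type*} [CommRing R]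
    (M : Matrix (Fin 2) (Fin 2) R) : M * M = M.trace • M - M.det • 1 := by
  nontriviality R
  have h := M.aeval_self_charpoly
  simp only [charpoly_fin_two, map_add, map_sub, map_mul, Polynomial.aeval_X,
    Polynomial.aeval_C, Algebra.algebraMap_eq_smul_one, smul_mul_assoc, one_mul, sq] at h
  rw [← sub_eq_zero, ← h]
  abel

namespace Orientation

variable {E : Type*} [NormedAddCommGroup E] [InnerProductSpace ℝ E] [Fact (finrank ℝ E = 2)]
  (o : Orientation ℝ E (Fin 2))

theorem areaForm_map_linearMap (f : E →ₗ[ℝ] E) (x y : E) :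
    o.areaForm (f x) (f y) = LinearMap.det f * o.areaForm x y := by
  have hb := o.finOrthonormalBasis_orientation two_pos Fact.out
  simp only [areaForm_to_volumeForm, o.volumeForm_robust _ hb]
  rw [← Basis.det_comp]
  congr 1
  ext i
  fin_cases i <;> rfl

end Orientation

section TwoDim

attribute [local instance] FiniteDimensional.of_fact_finrank_eq_two

variable {E : Type*} [NormedAddCommGroup E] [InnerProductSpace ℝ E] [Fact (finrank ℝ E = 2)]
  {u s : E}

theorem LinearMap.trace_eq_inner_add_inner (f : E →ₗ[ℝ] E) (hus : Orthonormal ℝ ![u, s]) :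
    LinearMap.trace ℝ E f = ⟪u, f u⟫ + ⟪s, f s⟫ := by
  have hspan : ⊤ ≤ Submodule.span ℝ (Set.range ![u, s]) :=
    (hus.linearIndependent.span_eq_top_of_card_eq_finrank
      (by simpa using (Fact.out : finrank ℝ E = 2).symm)).ge
  rw [LinearMap.trace_eq_sum_inner f (OrthonormalBasis.mk hus hspan)]
  simp [Fin.sum_univ_two]

theorem inner_map_map_eq_zero_of_norm_mul_norm_le_abs_det {f : E →ₗ[ℝ] E}
    (hus : Orthonormal ℝ ![u, s]) (hle : ‖f u‖ * ‖f s‖ ≤ |LinearMap.det f|) :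
    ⟪f u, f s⟫ = 0 := by
  let o : Orientation ℝ E (Fin 2) := (finBasisOfFinrankEq ℝ E Fact.out).orientation
  have hω : |o.areaForm u s| = 1 := by
    rw [o.abs_areaForm_of_orthogonal (by simpa using hus.2 (i := 0) (j := 1) (by simp))]
    have hu : ‖u‖ = 1 := by simpa using hus.1 0
    have hs : ‖s‖ = 1 := by simpa using hus.1 1
    rw [hu, hs, one_mul]
  have hlagrange := o.inner_sq_add_areaForm_sq (f u) (f s)
  rw [o.areaForm_map_linearMap, mul_pow, ← sq_abs (o.areaForm u s), hω, one_pow, mul_one,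
    ← mul_pow] at hlagrange
  have : (‖f u‖ * ‖f s‖) ^ 2 ≤ LinearMap.det f ^ 2 := by
    rw [← sq_abs (LinearMap.det f)]; gcongr
  exact pow_eq_zero_iff two_ne_zero |>.mp (by nlinarith [sq_nonneg ⟪f u, f s⟫])

theorem LinearMap.trace_eq_zero_of_apply_eq_smul {f : E →ₗ[ℝ] E} {c : ℝ}
    (hus : Orthonormal ℝ ![u, s]) (hdet : LinearMap.det f ≠ 0)
    (hle : ‖f u‖ * ‖f s‖ ≤ |LinearMap.det f|) (hc : f u = c • s) :
    LinearMap.trace ℝ E f = 0 := by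
  have hu : u ≠ 0 := by simpa using hus.ne_zero 0
  have hc0 : c ≠ 0 := by
    rintro rfl
    have hinj := (Module.End.isUnit_iff f).mp ((f.isUnit_iff_isUnit_det).mpr hdet.isUnit)
    exact hu (hinj.1 (by simpa using hc))
  have hus' : ⟪u, s⟫ = 0 := by simpa using hus.2 (i := 0) (j := 1) (by simp)
  have hs : ⟪s, f s⟫ = 0 := by
    have := inner_map_map_eq_zero_of_norm_mul_norm_le_abs_det hus hle
    rw [hc, inner_smul_left] at this
    simpa [hc0] using this
  rw [f.trace_eq_inner_add_inner hus, hc, inner_smul_right, hus', hs, mul_zero, add_zero]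

end TwoDim

instance : Fact (finrank ℝ (EuclideanSpace ℝ (Fin 2)) = 2) := ⟨finrank_euclideanSpace_fin⟩

theorem det_matCLM (B : Matrix (Fin 2) (Fin 2) ℝ) :
    LinearMap.det (matCLM B : EuclideanSpace ℝ (Fin 2) →ₗ[ℝ] EuclideanSpace ℝ (Fin 2)) = B.det := by
  rw [matCLM, coe_toEuclideanCLM_eq_toEuclideanLin, toEuclideanLin_eq_toLin_orthonormal,
    LinearMap.det_toLin]

theorem trace_matCLM (B : Matrix (Fin 2) (Fin 2) ℝ) :
    LinearMap.trace ℝ _ (matCLM B : EuclideanSpace ℝ (Fin 2) →ₗ[ℝ] EuclideanSpace ℝ (Fin 2)) =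
      B.trace := by
  rw [matCLM, coe_toEuclideanCLM_eq_toEuclideanLin, toEuclideanLin_eq_toLin_orthonormal,
    LinearMap.trace_eq_matrix_trace ℝ (EuclideanSpace.basisFun (Fin 2) ℝ).toBasis,
    LinearMap.toMatrix_toLin]

theorem stmt_12_general (B : Matrix (Fin 2) (Fin 2) ℝ) (hB : B.det = 1)
    (u s : EuclideanSpace ℝ (Fin 2)) (hu : ‖u‖ = 1) (hs : ‖s‖ = 1)
    (hperp : inner (𝕜 := ℝ) u s = (0 : ℝ))
    (hscon : ‖matCLM B s‖ = ‖matCLM B‖⁻¹)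
    (hmap : ∃ c : ℝ, matCLM B u = c • s) :
    B.trace = 0 ∧ B * B = -1 := by
  obtain ⟨c, hc⟩ := hmap
  have hus : Orthonormal ℝ ![u, s] := by
    rw [orthonormal_iff_ite]
    intro i j
    fin_cases i <;> fin_cases j <;> simp [hu, hs, hperp, real_inner_comm u s]
  have hdet : LinearMap.det (matCLM B : EuclideanSpace ℝ (Fin 2) →ₗ[ℝ] _) = 1 := by
    rw [det_matCLM, hB]
  have hle : ‖matCLM B u‖ * ‖matCLM B s‖ ≤ 1 :=
    calc _ ≤ ‖matCLM B‖ * ‖matCLM B‖⁻¹ := by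
          rw [hscon]; gcongr; simpa [hu] using (matCLM B).le_opNorm u
      _ ≤ 1 := mul_inv_le_one
  have htr : B.trace = 0 := by
    rw [← trace_matCLM]
    exact LinearMap.trace_eq_zero_of_apply_eq_smul hus (by simp [hdet]) (by simpa [hdet]) hc
  refine ⟨htr, ?_⟩
  rw [mul_self_eq_trace_smul_sub_det_smul, htr, hB, zero_smul, one_smul, zero_sub]

theorem stmt_12 (B : Matrix (Fin 2) (Fin 2) ℝ) (hB : B.det = 1)
    (hnorm : 1 < ‖matCLM B‖)
    (u s : EuclideanSpace ℝ (Fin 2)) (hu : ‖u‖ = 1) (hs : ‖s‖ = 1)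
    (hperp : inner (𝕜 := ℝ) u s = (0 : ℝ))
    (huexp : ‖matCLM B u‖ = ‖matCLM B‖)
    (hscon : ‖matCLM B s‖ = ‖matCLM B‖⁻¹)
    (hmap : ∃ c : ℝ, matCLM B u = c • s) :
    B.trace = 0 ∧ B * B = -1 :=
  stmt_12_general B hB u s hu hs hperp hscon hmap
end

section
/- Let φ : [a,b] → ℝ be continuous with nowhere dense zero set {x ∈ [a,b] : φ(x) = 0}. Then for every ε > 0 there exists a partition a = t₀ < t₁ < ⋯ < t_N = b such that each subinterval has length less than ε, and whenever φ vanishes at some point of an open subinterval (t_i, t_{i+1}), the function φ is strictly positive (respectively, nonvanishing) throughout each adjacent subinterval of the partition, provided φ ≥ 0. -/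
open Set

theorem stmt_18 (a b : ℝ) (hab : a < b) (φ : ℝ → ℝ)
    (hcont : ContinuousOn φ (Icc a b))
    (hnonneg : ∀ x ∈ Icc a b, 0 ≤ φ x)
    (hnwd : IsNowhereDense {x ∈ Icc a b | φ x = 0}) :
    ∀ ε > 0, ∃ (N : ℕ) (t : ℕ → ℝ),
      0 < N ∧ t 0 = a ∧ t N = b ∧
      (∀ i < N, t i < t (i + 1)) ∧
      (∀ i < N, t (i + 1) - t i < ε) ∧
      (∀ i < N, (∃ x ∈ Ioo (t i) (t (i + 1)), φ x = 0) →
        (∀ j < N, (j + 1 = i ∨ j = i + 1) → ∀ x ∈ Icc (t j) (t (j + 1)), 0 < φ x)) := by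
  intro ε hε
  set Z : Set ℝ := {x ∈ Icc a b | φ x = 0} with hZ
  have hZclosed : IsClosed Z := by
    have : Z = Icc a b ∩ φ ⁻¹' {0} := by
      ext x
      simp only [hZ, Set.mem_setOf_eq, Set.mem_inter_iff, Set.mem_preimage,
        Set.mem_singleton_iff]
    rw [this]
    exact hcont.preimage_isClosed_of_isClosed isClosed_Icc isClosed_singleton
  have hint : interior Z = ∅ := by
    have := hnwd
    rwa [IsNowhereDense, hZclosed.closure_eq] at this
  -- finding a clean closed subinterval inside any open interval in [a,b]
  have hfind : ∀ c d : ℝ, a ≤ c → c < d → d ≤ b →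
      ∃ u v : ℝ, c < u ∧ u < v ∧ v < d ∧ ∀ x ∈ Icc u v, 0 < φ x := by
    intro c d hac hcd hdb
    have hnsub : ¬ (Ioo c d ⊆ Z) := by
      intro h
      have h2 : Ioo c d ⊆ interior Z := interior_maximal h isOpen_Ioo
      rw [hint] at h2
      exact (Set.nonempty_Ioo.2 hcd).ne_empty (Set.subset_empty_iff.mp h2)
    rw [Set.not_subset] at hnsub
    obtain ⟨w, hw, hwZ⟩ := hnsub
    have hUopen : IsOpen (Zᶜ ∩ Ioo c d) := hZclosed.isOpen_compl.inter isOpen_Ioo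
    obtain ⟨r, hr, hball⟩ := Metric.isOpen_iff.mp hUopen w ⟨hwZ, hw⟩
    have hball' : Icc (w - r/2) (w + r/2) ⊆ Zᶜ ∩ Ioo c d := by
      intro x hx
      apply hball
      rw [Metric.mem_ball, Real.dist_eq]
      rw [abs_lt]
      constructor <;> [linarith [hx.1]; linarith [hx.2]]
    have hu : c < w - r/2 := (hball' ⟨le_refl _, by linarith⟩).2.1
    have hv : w + r/2 < d := (hball' ⟨by linarith, le_refl _⟩).2.2
    refine ⟨w - r/2, w + r/2, hu, by linarith, hv, ?_⟩
    intro x hx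
    obtain ⟨hxZ, hxcd⟩ := hball' hx
    have hxab : x ∈ Icc a b := ⟨hac.trans hxcd.1.le, hxcd.2.le.trans hdb⟩
    have hne : φ x ≠ 0 := by
      intro h0
      exact hxZ ⟨hxab, h0⟩
    exact lt_of_le_of_ne (hnonneg x hxab) (Ne.symm hne)
  set δ : ℝ := ε / 2 with hδdef
  have hδ : 0 < δ := by positivity
  -- the recursive partition property
  have hbase : ∀ x : ℝ, x < b → b - x ≤ δ →
      ∃ N : ℕ, ∃ t : ℕ → ℝ, 0 < N ∧ t 0 = x ∧ t N = b ∧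
      (∀ i < N, t i < t (i + 1)) ∧
      (∀ i < N, t (i + 1) - t i < ε) ∧
      (∀ i < N, (∃ y ∈ Ioo (t i) (t (i + 1)), φ y = 0) →
        (∀ j < N, (j + 1 = i ∨ j = i + 1) → ∀ y ∈ Icc (t j) (t (j + 1)), 0 < φ y)) := by
    intro x hxb hle
    refine ⟨1, fun n => if n = 0 then x else b, one_pos, by simp, by simp, ?_, ?_, ?_⟩
    · intro i hi
      have : i = 0 := by omega
      subst this; simpa using hxb
    · intro i hi
      have : i = 0 := by omega
      subst this
      show b - x < ε
      linarith
    · intro i hi _ j hj hcase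
      exfalso; omega
  have key : ∀ n : ℕ, ∀ x : ℝ, a ≤ x → x < b → b - x ≤ n * (δ/2) + δ →
      ∃ N : ℕ, ∃ t : ℕ → ℝ, 0 < N ∧ t 0 = x ∧ t N = b ∧
      (∀ i < N, t i < t (i + 1)) ∧
      (∀ i < N, t (i + 1) - t i < ε) ∧
      (∀ i < N, (∃ y ∈ Ioo (t i) (t (i + 1)), φ y = 0) →
        (∀ j < N, (j + 1 = i ∨ j = i + 1) → ∀ y ∈ Icc (t j) (t (j + 1)), 0 < φ y)) := by
    intro n
    induction n with
    | zero =>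
      intro x hax hxb hle
      exact hbase x hxb (by simpa using hle)
    | succ n ih =>
      intro x hax hxb hle
      by_cases hbx : b - x ≤ δ
      · exact hbase x hxb hbx
      push_neg at hbx
      obtain ⟨u, v, hu, huv, hv, hclean⟩ :=
        hfind (x + δ/2) (x + δ) (by linarith) (by linarith) (by linarith)
      have hvb : v < b := by linarith
      have hav : a ≤ v := by linarith
      have hrec : b - v ≤ n * (δ/2) + δ := by
        push_cast at hle ⊢
        linarith
      obtain ⟨N', t', hN', ht0, htN, hmono, hlen, hadj⟩ := ih v hav hvb hrec
      set T : ℕ → ℝ := fun m => if m = 0 then x else if m = 1 then u else t' (m - 2)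
        with hT
      have hT0 : T 0 = x := by simp [hT]
      have hT1 : T 1 = u := by simp [hT]
      have hT2 : ∀ m, T (m + 2) = t' m := by
        intro m; simp [hT]
      have hTv : T 2 = v := by
        have := hT2 0
        simpa [ht0] using this
      refine ⟨N' + 2, T, by omega, hT0, ?_, ?_, ?_, ?_⟩
      · rw [hT2 N']; exact htN
      · intro i hi
        match i with
        | 0 => rw [hT0, hT1]; linarith
        | 1 => rw [hT1, hTv]; exact huv
        | (i' + 2) =>
          rw [hT2 i', show i' + 2 + 1 = (i' + 1) + 2 from rfl, hT2 (i' + 1)]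
          exact hmono i' (by omega)
      · intro i hi
        match i with
        | 0 => rw [hT0, hT1]; linarith
        | 1 => rw [hT1, hTv]; linarith
        | (i' + 2) =>
          rw [hT2 i', show i' + 2 + 1 = (i' + 1) + 2 from rfl, hT2 (i' + 1)]
          exact hlen i' (by omega)
      · intro i hi htrig j hj hcase
        have hcleanT : ∀ y ∈ Icc (T 1) (T 2), 0 < φ y := by
          rw [hT1, hTv]; exact hclean
        match i with
        | 0 =>
          have hj1 : j = 1 := by omega
          subst hj1
          exact hcleanT
        | 1 =>
          exfalso
          obtain ⟨z, hz, hz0⟩ := htrig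
          rw [hT1, hTv] at hz
          have := hclean z ⟨hz.1.le, hz.2.le⟩
          linarith
        | (i' + 2) =>
          rw [hT2 i', show i' + 2 + 1 = (i' + 1) + 2 from rfl, hT2 (i' + 1)] at htrig
          have hi' : i' < N' := by omega
          rcases hcase with h | h
          · -- j + 1 = i' + 2, so j = i' + 1
            have hji : j = i' + 1 := by omega
            by_cases hj1 : j = 1
            · subst hj1
              exact hcleanT
            · have hi1 : 1 ≤ i' := by omega
              obtain ⟨j', rfl⟩ : ∃ j', j = j' + 2 := ⟨j - 2, by omega⟩
              rw [hT2 j', show j' + 2 + 1 = (j' + 1) + 2 from rfl, hT2 (j' + 1)]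
              exact hadj i' hi' htrig j' (by omega) (Or.inl (by omega))
          · -- j = i' + 3
            obtain ⟨j', rfl⟩ : ∃ j', j = j' + 2 := ⟨j - 2, by omega⟩
            have hji : j' = i' + 1 := by omega
            subst hji
            rw [hT2 (i' + 1), show (i' + 1) + 2 + 1 = (i' + 2) + 2 from rfl,
              hT2 (i' + 2)]
            exact hadj i' hi' htrig (i' + 1) (by omega) (Or.inr rfl)
  obtain ⟨n, hn⟩ := exists_nat_ge ((b - a) / (δ / 2))
  have hlen : b - a ≤ n * (δ / 2) + δ := by
    rw [div_le_iff₀ (by positivity)] at hn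
    linarith
  exact key n a le_rfl hab hlen
end

section
/- Let θ : [x₁, x₂] → ℝ be a C¹ function satisfying the differential equation θ'(x) = cos²θ(x) − W(x)·sin²θ(x), where W : [x₁,x₂] → ℝ is continuous with W(x) ≥ C > 0 for all x, and suppose that C is large enough that sin²(2s) − C·cos²(2s) < −4s/(x₂ − x₁) for a given s ∈ (0, π/8). If θ(x₁) ∈ (π/2 − s, π/2 + s), then there exists x* ∈ (x₁, x₂) with θ(x*) = π/2 − s, i.e., θ exits the band (π/2 − s, π/2 + s) through its lower edge before time x₂. -/
open Set Real

theorem stmt_19 (x₁ x₂ : ℝ) (hx : x₁ < x₂)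
    (θ W : ℝ → ℝ) (C s : ℝ)
    (hWcont : ContinuousOn W (Icc x₁ x₂))
    (hC : 0 < C) (hWC : ∀ x ∈ Icc x₁ x₂, C ≤ W x)
    (hs : s ∈ Ioo (0 : ℝ) (π / 8))
    (hCs : Real.sin (2 * s) ^ 2 - C * Real.cos (2 * s) ^ 2 < -4 * s / (x₂ - x₁))
    (hθ : ∀ x ∈ Icc x₁ x₂,
      HasDerivWithinAt θ (Real.cos (θ x) ^ 2 - W x * Real.sin (θ x) ^ 2) (Icc x₁ x₂) x)
    (hinit : θ x₁ ∈ Ioo (π / 2 - s) (π / 2 + s)) :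
    ∃ x ∈ Ioo x₁ x₂, θ x = π / 2 - s := by
  obtain ⟨hs0, hs8⟩ := hs
  have hpi := Real.pi_pos
  have h2s : 2 * s < π / 2 := by linarith
  have hxpos : (0:ℝ) < x₂ - x₁ := sub_pos.2 hx
  set K := Real.sin (2*s) ^ 2 - C * Real.cos (2*s) ^ 2 with hK
  have hKneg : K < 0 := lt_trans hCs (div_neg_of_neg_of_pos (by linarith) hxpos)
  have hKx : K * (x₂ - x₁) < -4 * s := (lt_div_iff₀ hxpos).1 hCs
  have hθc : ContinuousOn θ (Icc x₁ x₂) := fun x hx => (hθ x hx).continuousWithinAt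
  -- derivative bound in the band
  have hband : ∀ x ∈ Icc x₁ x₂, π/2 - s < θ x → θ x < π/2 + s →
      Real.cos (θ x) ^ 2 - W x * Real.sin (θ x) ^ 2 ≤ K := by
    intro x hxm h1 h2
    set t := θ x - π/2 with htdef
    have habs : |t| < s := abs_lt.2 ⟨by rw [htdef]; linarith, by rw [htdef]; linarith⟩
    have htn : (0:ℝ) ≤ |t| := abs_nonneg t
    have hsin_eq : Real.sin t = -Real.cos (θ x) := by
      rw [show t = -(π/2 - θ x) from by ring, Real.sin_neg, Real.sin_pi_div_two_sub]
    have hcos_eq : Real.cos t = Real.sin (θ x) := by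
      rw [show t = -(π/2 - θ x) from by ring, Real.cos_neg, Real.cos_pi_div_two_sub]
    have hsinabs : Real.sin t ^ 2 = Real.sin |t| ^ 2 := by
      rcases abs_cases t with ⟨h, _⟩ | ⟨h, _⟩ <;> rw [h] <;> simp [Real.sin_neg]
    have hA : Real.cos (θ x) ^ 2 ≤ Real.sin (2*s) ^ 2 := by
      have hlt : Real.sin |t| < Real.sin (2*s) :=
        Real.sin_lt_sin_of_lt_of_le_pi_div_two (by linarith) h2s.le (by linarith)
      have h0 : 0 ≤ Real.sin |t| :=
        Real.sin_nonneg_of_nonneg_of_le_pi htn (by linarith)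
      have hsq : Real.sin |t| ^ 2 ≤ Real.sin (2*s) ^ 2 := pow_le_pow_left₀ h0 hlt.le 2
      calc Real.cos (θ x) ^ 2 = Real.sin t ^ 2 := by rw [hsin_eq]; ring
        _ = Real.sin |t| ^ 2 := hsinabs
        _ ≤ _ := hsq
    have hB : Real.cos (2*s) ^ 2 ≤ Real.sin (θ x) ^ 2 := by
      have hlt : Real.cos (2*s) < Real.cos |t| :=
        Real.cos_lt_cos_of_nonneg_of_le_pi htn (by linarith) (by linarith)
      have h0 : 0 ≤ Real.cos (2*s) :=
        Real.cos_nonneg_of_mem_Icc ⟨by linarith, h2s.le⟩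
      have hsq : Real.cos (2*s) ^ 2 ≤ Real.cos |t| ^ 2 := pow_le_pow_left₀ h0 hlt.le 2
      calc Real.cos (2*s) ^ 2 ≤ Real.cos |t| ^ 2 := hsq
        _ = Real.cos t ^ 2 := by rw [Real.cos_abs]
        _ = Real.sin (θ x) ^ 2 := by rw [hcos_eq]
    have hW : C * Real.cos (2*s) ^ 2 ≤ W x * Real.sin (θ x) ^ 2 :=
      mul_le_mul (hWC x hxm) hB (sq_nonneg _) (le_trans hC.le (hWC x hxm))
    rw [hK]; linarith
  have hderiv : ∀ y ∈ Ioo x₁ x₂,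
      HasDerivAt θ (Real.cos (θ y) ^ 2 - W y * Real.sin (θ y) ^ 2) y := fun y hy =>
    (hθ y (Ioo_subset_Icc_self hy)).hasDerivAt (Icc_mem_nhds hy.1 hy.2)
  by_contra hcon
  push_neg at hcon
  -- θ stays above π/2 - s on [x₁, x₂)
  have hlow : ∀ x ∈ Ico x₁ x₂, π/2 - s < θ x := by
    intro x hxm
    rcases eq_or_lt_of_le hxm.1 with rfl | hx1
    · exact hinit.1
    by_contra hle
    push_neg at hle
    obtain ⟨z, hz, hzeq⟩ := intermediate_value_Icc' hx1.le
      (hθc.mono (Icc_subset_Icc le_rfl hxm.2.le)) ⟨hle, hinit.1.le⟩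
    have hz1 : x₁ < z := by
      rcases eq_or_lt_of_le hz.1 with rfl | h
      · exact absurd hzeq (by linarith [hinit.1])
      · exact h
    exact hcon z ⟨hz1, lt_of_le_of_lt hz.2 hxm.2⟩ hzeq
  have hlow2 : π/2 - s ≤ θ x₂ := by
    by_contra hle
    push_neg at hle
    obtain ⟨z, hz, hzeq⟩ := intermediate_value_Icc' hx.le hθc ⟨hle.le, hinit.1.le⟩
    have hz1 : x₁ < z := by
      rcases eq_or_lt_of_le hz.1 with rfl | h
      · exact absurd hzeq (by linarith [hinit.1])
      · exact h
    have hz2 : z < x₂ := by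
      rcases eq_or_lt_of_le hz.2 with rfl | h
      · exact absurd hzeq (by linarith)
      · exact h
    exact hcon z ⟨hz1, hz2⟩ hzeq
  -- θ stays below π/2 + s on [x₁, x₂]
  have hupp : ∀ x ∈ Icc x₁ x₂, θ x < π/2 + s := by
    by_contra hle
    push_neg at hle
    obtain ⟨y, hym, hyge⟩ := hle
    set S := Icc x₁ x₂ ∩ θ ⁻¹' Ici (π/2 + s) with hS
    have hSne : S.Nonempty := ⟨y, hym, hyge⟩
    have hSc : IsClosed S :=
      hθc.preimage_isClosed_of_isClosed isClosed_Icc isClosed_Ici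
    have hSbd : BddBelow S := ⟨x₁, fun z hz => hz.1.1⟩
    set c := sInf S with hc
    have hcS : c ∈ S := hSc.csInf_mem hSne hSbd
    have hc1 : x₁ < c := by
      rcases eq_or_lt_of_le hcS.1.1 with heq | h
      · exfalso
        have h2' : π/2 + s ≤ θ x₁ := by rw [heq]; exact hcS.2
        linarith [hinit.2]
      · exact h
    have hc2 : c ≤ x₂ := hcS.1.2
    have hanti : StrictAntiOn θ (Icc x₁ c) := by
      apply strictAntiOn_of_deriv_neg (convex_Icc _ _)
        (hθc.mono (Icc_subset_Icc le_rfl hc2))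
      intro z hz
      rw [interior_Icc] at hz
      have hzIoo : z ∈ Ioo x₁ x₂ := ⟨hz.1, lt_of_lt_of_le hz.2 hc2⟩
      have hzlow : π/2 - s < θ z := hlow z ⟨hz.1.le, hzIoo.2⟩
      have hzupp : θ z < π/2 + s := by
        by_contra hge
        push_neg at hge
        have : z ∈ S := ⟨Ioo_subset_Icc_self hzIoo, hge⟩
        exact absurd (csInf_le hSbd this) (not_le.2 hz.2)
      rw [(hderiv z hzIoo).deriv]
      exact lt_of_le_of_lt (hband z (Ioo_subset_Icc_self hzIoo) hzlow hzupp) hKneg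
    have := hanti (left_mem_Icc.2 hc1.le) (right_mem_Icc.2 hc1.le) hc1
    have hcge : π/2 + s ≤ θ c := hcS.2
    linarith [hinit.2]
  -- mean value estimate on the whole interval
  set g := fun x => θ x - K * x with hg
  have hganti : AntitoneOn g (Icc x₁ x₂) := by
    apply antitoneOn_of_deriv_nonpos (convex_Icc _ _)
    · exact hθc.sub ((continuous_const.mul continuous_id).continuousOn)
    · intro z hz
      rw [interior_Icc] at hz
      exact ((hderiv z hz).sub ((hasDerivAt_id z).const_mul K)).differentiableAt.differentiableWithinAt
    · intro z hz
      rw [interior_Icc] at hz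
      have hd : HasDerivAt g (Real.cos (θ z) ^ 2 - W z * Real.sin (θ z) ^ 2 - K * 1) z :=
        (hderiv z hz).sub ((hasDerivAt_id z).const_mul K)
      rw [hd.deriv]
      have hb := hband z (Ioo_subset_Icc_self hz) (hlow z ⟨hz.1.le, hz.2⟩)
        (hupp z (Ioo_subset_Icc_self hz))
      linarith
  have hg12 : g x₂ ≤ g x₁ := hganti (left_mem_Icc.2 hx.le) (right_mem_Icc.2 hx.le) hx.le
  simp only [hg] at hg12
  have hexp : K * x₂ - K * x₁ = K * (x₂ - x₁) := by ring
  linarith [hinit.2]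
end
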